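/- arXiv:2503.18819 — 4 statements merged into one kernel-verified Lean document; each statement's English description precedes it below -/
import Mathlib

section
/- For every integer n ≥ 1 and all real numbers a₀, aₙ with a₀ > aₙ > 0, the polynomial p_n(z) = aₙ·zⁿ + a₀·∑_{j=0}^{n-1} z^j has no zeros in the closed unit disk; that is, for every complex number z with |z| ≤ 1 one has aₙ·zⁿ + a₀·∑_{j=0}^{n-1} z^j ≠ 0. -/
/-!
Multiplying by `z - 1` turns `pₙ(z) = 0` into `zⁿ (aₙ z + (a₀ - aₙ)) = a₀`. For `z ≠ 1` in the
closed unit disk, `aₙ z + (a₀ - aₙ)` is `a₀` times a proper convex combination of `z` and `1`,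
so by strict convexity of the disk it has modulus `< a₀`, and `|zⁿ| ≤ 1` rules the equation out.
At `z = 1` the polynomial takes the positive value `aₙ + n a₀`.
-/

theorem sub_one_mul_add_mul_geom_sum {R : Type*} [CommRing R] (a b x : R) (n : ℕ) :
    (x - 1) * (b * x ^ n + a * ∑ j ∈ Finset.range n, x ^ j) =
      x ^ n * (b * x + (a - b)) - a := by
  linear_combination a * geom_sum_mul x n

theorem norm_smul_add_sub_smul_lt {E : Type*} [NormedAddCommGroup E] [NormedSpace ℝ E]
    [StrictConvexSpace ℝ E] {x y : E} (hx : ‖x‖ ≤ 1) (hy : ‖y‖ ≤ 1) (hxy : x ≠ y)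
    {a b : ℝ} (hb : 0 < b) (hba : b < a) :
    ‖b • x + (a - b) • y‖ < a := by
  have ha : 0 < a := hb.trans hba
  have hcombo : ‖(b / a) • x + (1 - b / a) • y‖ < 1 :=
    norm_combo_lt_of_ne hx hy hxy (div_pos hb ha) (by rwa [sub_pos, div_lt_one ha])
      (add_sub_cancel _ _)
  calc ‖b • x + (a - b) • y‖ = ‖a • ((b / a) • x + (1 - b / a) • y)‖ := by
        rw [smul_add, smul_smul, smul_smul, mul_div_cancel₀ _ ha.ne', mul_one_sub,
          mul_div_cancel₀ _ ha.ne']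
    _ = a * ‖(b / a) • x + (1 - b / a) • y‖ := by rw [norm_smul, Real.norm_of_nonneg ha.le]
    _ < a := mul_lt_of_lt_one_right ha hcombo

theorem no_zeros_in_closed_unit_disk_general (n : ℕ) (a₀ aN : ℝ)
    (h₁ : a₀ > aN) (h₂ : aN > 0) (z : ℂ) (hz : ‖z‖ ≤ 1) :
    (aN : ℂ) * z ^ n + (a₀ : ℂ) * ∑ j ∈ Finset.range n, z ^ j ≠ 0 := by
  intro h
  rcases eq_or_ne z 1 with rfl | hz1
  · have hpos : 0 < aN + a₀ * n :=
      add_pos_of_pos_of_nonneg h₂ (mul_nonneg (h₂.trans h₁).le n.cast_nonneg)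
    have hvalue : ((aN + a₀ * n : ℝ) : ℂ) = 0 := by push_cast; simpa using h
    exact hpos.ne' (Complex.ofReal_eq_zero.mp hvalue)
  have hfactor := sub_one_mul_add_mul_geom_sum (a₀ : ℂ) aN z n
  rw [h, mul_zero, eq_comm, sub_eq_zero] at hfactor
  have hnorm : ‖z ^ n‖ * ‖(aN : ℂ) * z + (a₀ - aN)‖ = a₀ := by
    rw [← norm_mul, hfactor, Complex.norm_real, Real.norm_of_nonneg (h₂.trans h₁).le]
  have hlt : ‖(aN : ℂ) * z + (a₀ - aN)‖ < a₀ := by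
    simpa only [Complex.real_smul, smul_eq_mul, mul_one, Complex.ofReal_sub] using
      norm_smul_add_sub_smul_lt hz (norm_one (α := ℂ)).le hz1 h₂ h₁
  have hle : ‖z ^ n‖ ≤ 1 := by rw [norm_pow]; exact pow_le_one₀ (norm_nonneg z) hz
  linarith [mul_le_of_le_one_left (norm_nonneg ((aN : ℂ) * z + (a₀ - aN))) hle]

/-- For every integer `n ≥ 1` and all real numbers `a₀ > aₙ > 0`, the polynomial
`pₙ(z) = aₙ·zⁿ + a₀·∑_{j=0}^{n-1} z^j` has no zeros in the closed unit disk. -/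
theorem no_zeros_in_closed_unit_disk (n : ℕ) (hn : 1 ≤ n) (a₀ aN : ℝ)
    (h₁ : a₀ > aN) (h₂ : aN > 0) (z : ℂ) (hz : ‖z‖ ≤ 1) :
    (aN : ℂ) * z ^ n + (a₀ : ℂ) * ∑ j ∈ Finset.range n, z ^ j ≠ 0 :=
  no_zeros_in_closed_unit_disk_general n a₀ aN h₁ h₂ z hz
end

section
/- For every integer k ≥ 1 and all real numbers b₀, b_k with b₀ > b_k > 0, the polynomial q(z) = b_k·∑_{j=1}^{k} z^j + b₀ has no zeros in the closed unit disk; that is, for every complex number z with |z| ≤ 1 one has b_k·∑_{j=1}^{k} z^j + b₀ ≠ 0. -/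
/-! If `q(z) = 0` then multiplying by `1 - z` gives `b₀ = (b₀ - b_k) z + b_k z^(k+1)`. With positive
weights summing to `b₀` and both points in the closed unit disk, comparing real parts forces
`Re z = 1`, hence `z = 1`; but `q(1) = k b_k + b₀ > 0`. -/

open Finset

theorem mul_one_sub_geom_sum_Icc {R : Type*} [CommRing R] (x : R) (k : ℕ) :
    (1 - x) * ∑ j ∈ Icc 1 k, x ^ j = x - x ^ (k + 1) := by
  have h := geom_sum_Ico_mul x (Nat.le_add_left 1 k)
  rw [Ico_add_one_right_eq_Icc] at h
  linear_combination -h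

namespace Complex

theorem eq_one_of_norm_le_one_of_one_le_re {z : ℂ} (hz : ‖z‖ ≤ 1) (hre : 1 ≤ z.re) : z = 1 := by
  have hre_eq : z.re = 1 := le_antisymm ((re_le_norm z).trans hz) hre
  have him : z.im = 0 := abs_re_eq_norm.1 <| by
    rw [hre_eq, abs_one]
    exact le_antisymm (hre_eq ▸ re_le_norm z) hz
  exact ext hre_eq him

theorem eq_one_of_mul_add_mul_eq_add {a b : ℝ} (ha : 0 < a) (hb : 0 ≤ b) {z w : ℂ}
    (hz : ‖z‖ ≤ 1) (hw : ‖w‖ ≤ 1) (h : a * z + b * w = a + b) : z = 1 := by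
  have hre : a * z.re + b * w.re = a + b := by simpa using congrArg re h
  have hw_re : w.re ≤ 1 := (re_le_norm w).trans hw
  refine eq_one_of_norm_le_one_of_one_le_re hz ?_
  nlinarith [mul_le_mul_of_nonneg_left hw_re hb]

end Complex

theorem no_zeros_in_closed_unit_disk'_general (k : ℕ) (b₀ bk : ℝ)
    (h₁ : b₀ > bk) (h₂ : bk > 0) (z : ℂ) (hz : ‖z‖ ≤ 1) :
    (bk : ℂ) * ∑ j ∈ Finset.Icc 1 k, z ^ j + (b₀ : ℂ) ≠ 0 := by
  intro hq
  have hcomb : ((b₀ - bk : ℝ) : ℂ) * z + (bk : ℂ) * z ^ (k + 1) = (b₀ - bk : ℝ) + bk := by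
    push_cast
    linear_combination (z - 1) * hq + (bk : ℂ) * mul_one_sub_geom_sum_Icc z k
  have hz1 : z = 1 := Complex.eq_one_of_mul_add_mul_eq_add (sub_pos.2 h₁) h₂.le hz
    (by rw [norm_pow]; exact pow_le_one₀ (norm_nonneg z) hz) hcomb
  subst hz1
  have hq_re : (k : ℝ) * bk + b₀ = 0 := by simpa [mul_comm] using congrArg Complex.re hq
  have : 0 ≤ (k : ℝ) * bk := by positivity
  linarith

/-- For every integer `k ≥ 1` and all real numbers `b₀ > b_k > 0`, the polynomial
`q(z) = b_k·∑_{j=1}^{k} z^j + b₀` has no zeros in the closed unit disk. -/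
theorem no_zeros_in_closed_unit_disk' (k : ℕ) (hk : 1 ≤ k) (b₀ bk : ℝ)
    (h₁ : b₀ > bk) (h₂ : bk > 0) (z : ℂ) (hz : ‖z‖ ≤ 1) :
    (bk : ℂ) * ∑ j ∈ Finset.Icc 1 k, z ^ j + (b₀ : ℂ) ≠ 0 :=
  no_zeros_in_closed_unit_disk'_general k b₀ bk h₁ h₂ z hz
end

section
/- For every integer n ≥ 1 and every complex number w with |w| ≤ 1, one has wⁿ + 2·∑_{j=0}^{n-1} w^j ≠ 0. -/
/-!
Multiplying by `w - 1` turns `wⁿ + 2·∑_{j<n} w^j` into `wⁿ(w + 1) - 2`, so a zero `w ≠ 1` would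
satisfy `|w|ⁿ·|w + 1| = 2`. Strict convexity of the unit disk gives `|w + 1| < 2` for `w ≠ 1`,
which is impossible; at `w = 1` the expression is `1 + 2n > 0`.
-/

theorem pow_add_two_mul_geom_sum_mul_sub_one {R : Type*} [CommRing R] (x : R) (n : ℕ) :
    (x ^ n + 2 * ∑ j ∈ Finset.range n, x ^ j) * (x - 1) = x ^ n * (x + 1) - 2 := by
  linear_combination 2 * geom_sum_mul x n

theorem norm_add_lt_two_of_ne {E : Type*} [NormedAddCommGroup E] [NormedSpace ℝ E]
    [StrictConvexSpace ℝ E] {x y : E} (hx : ‖x‖ ≤ 1) (hy : ‖y‖ ≤ 1) (hne : x ≠ y) :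
    ‖x + y‖ < 2 := by
  have hmid := norm_combo_lt_of_ne hx hy hne (a := 1 / 2) (b := 1 / 2)
    (by norm_num) (by norm_num) (by norm_num)
  rw [← smul_add, norm_smul, Real.norm_of_nonneg (by norm_num)] at hmid
  linarith

theorem Complex.norm_pow_mul_add_one_lt_two {w : ℂ} (hw : ‖w‖ ≤ 1) (hw1 : w ≠ 1) (n : ℕ) :
    ‖w ^ n * (w + 1)‖ < 2 := by
  rw [norm_mul, norm_pow]
  calc ‖w‖ ^ n * ‖w + 1‖ ≤ 1 * ‖w + 1‖ := by
        gcongr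
        exact pow_le_one₀ (norm_nonneg w) hw
    _ < 2 := by simpa using norm_add_lt_two_of_ne hw norm_one.le hw1

theorem pow_add_two_mul_geom_sum_ne_zero_general (n : ℕ) (w : ℂ)
    (hw : ‖w‖ ≤ 1) :
    w ^ n + 2 * ∑ j ∈ Finset.range n, w ^ j ≠ 0 := by
  intro h
  rcases eq_or_ne w 1 with rfl | hw1
  · simp only [one_pow, Finset.sum_const, Finset.card_range, nsmul_eq_mul, mul_one] at h
    have hnat : 1 + 2 * n = 0 := by exact_mod_cast h
    omega
  · have hroot : w ^ n * (w + 1) = 2 := by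
      rw [← sub_eq_zero, ← pow_add_two_mul_geom_sum_mul_sub_one, h, zero_mul]
    have hlt := Complex.norm_pow_mul_add_one_lt_two hw hw1 n
    norm_num [hroot] at hlt

/-- For every integer `n ≥ 1` and every complex `w` with `|w| ≤ 1`,
`wⁿ + 2·∑_{j=0}^{n-1} w^j ≠ 0`. -/
theorem pow_add_two_mul_geom_sum_ne_zero (n : ℕ) (hn : 1 ≤ n) (w : ℂ)
    (hw : ‖w‖ ≤ 1) :
    w ^ n + 2 * ∑ j ∈ Finset.range n, w ^ j ≠ 0 :=
  pow_add_two_mul_geom_sum_ne_zero_general n w hw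
end

section
/- Let w be a complex number with |w| = 1 (so that 2 + w + w² ≠ 0). Then Re( (−3w² − w + 6)/(2 + w + w²) ) = 8/|2 + w + w²|². -/
/-!
Write `N = 6 - w - 3w²` and `D = 2 + w + w²`, so that `Re (N / D) = Re (N D̄) / |D|²`.
On the unit circle `w̄ = w⁻¹`, and expanding gives `N D̄ = 8 + (ū - u)` with `u = 5w + 6w²`;
the bracket is purely imaginary, so `Re (N D̄) = 8`.
-/

open ComplexConjugate

namespace Complex

theorem re_div_eq_re_mul_conj_div_normSq (z d : ℂ) :
    (z / d).re = (z * conj d).re / normSq d := by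
  rw [div_eq_mul_inv, inv_def, ← mul_assoc, re_mul_ofReal, div_eq_mul_inv]

theorem re_conj_sub_self (u : ℂ) : (conj u - u).re = 0 := by
  simp

theorem mul_conj_eq_one_of_norm_eq_one {w : ℂ} (hw : ‖w‖ = 1) : w * conj w = 1 := by
  rw [mul_conj, ← Complex.sq_norm, hw, one_pow, ofReal_one]

theorem mul_conj_eq_eight_add_conj_sub {w : ℂ} (hw : ‖w‖ = 1) :
    (-3 * w ^ 2 - w + 6) * conj (2 + w + w ^ 2) =
      8 + (conj (5 * w + 6 * w ^ 2) - (5 * w + 6 * w ^ 2)) := by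
  have hconj := mul_conj_eq_one_of_norm_eq_one hw
  simp only [map_add, map_mul, map_pow, map_ofNat]
  linear_combination (-3 * w * conj w - 3 * w - conj w - 4) * hconj

end Complex

/-- For `|w| = 1`: `Re((−3w² − w + 6)/(2 + w + w²)) = 8/|2 + w + w²|²`. -/
theorem re_eq_eight_div_abs_sq (w : ℂ) (hw : ‖w‖ = 1) :
    ((-3 * w ^ 2 - w + 6) / (2 + w + w ^ 2)).re =
      8 / ‖2 + w + w ^ 2‖ ^ 2 := by
  rw [Complex.re_div_eq_re_mul_conj_div_normSq, Complex.mul_conj_eq_eight_add_conj_sub hw,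
    Complex.add_re, Complex.re_conj_sub_self, Complex.sq_norm]
  norm_num
end
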